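/- arXiv:1311.3606 — 2 statements merged into one kernel-verified Lean document; each statement's English description precedes it below -/
import Mathlib

section
/- Let p̃(s,x;T,v) be the transition density of the d-dimensional linear SDE dX̃_t = (B̃(t)X̃_t + β̃(t))dt + σ̃(t)dW_t, where B̃, β̃ are continuously differentiable, σ̃ is Lipschitz, and ã = σ̃σ̃' is uniformly elliptic on [0,T]. Then there exist constants C, Λ > 0 such that p̃(s,x;T,v) ≤ C(T-s)^{-d/2} exp(-Λ‖v-x‖²/(T-s)) for all s ∈ [0,T) and all x ∈ ℝ^d. -/
/-
The density is Gaussian with covariance `K s` and mean `μ s x`, so everything reduces to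
two-sided bounds. Along `r ↦ Φ r s *ᵥ y` the derivative of `|Φ r s *ᵥ y|²` is
`2 ⟪Φ r s *ᵥ y, B̃ r *ᵥ Φ r s *ᵥ y⟫`, so Grönwall's inequality, run forwards and backwards, makes
all propagators `Φ r s`, `0 ≤ s ≤ r ≤ T`, uniformly bounded with uniformly bounded inverses.
Together with the ellipticity and boundedness of `ã = σ̃ σ̃ᵀ` this squeezes `K s` between
`m (T - s)` and `M (T - s)` times the identity, which bounds `det (K s)` below by
`(m (T - s)) ^ d` and `⟪e, (K s)⁻¹ e⟫` below by `|e|² / (M (T - s))`. Finally `Φ T s *ᵥ v - v`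
and the drift integral are `O(T - s)`, so `|v - μ s x|² ≥ c |v - x|² / 2 - D (T - s)²`, and the
error term only contributes the bounded factor `exp (D (T - s) / (2 M))`.
-/

open Matrix Real intervalIntegral

attribute [local instance] Matrix.normedAddCommGroup Matrix.normedSpace

open MeasureTheory Set

namespace Matrix

variable {n : Type*} [Fintype n]

lemma dotProduct_self_nonneg (z : n → ℝ) : 0 ≤ z ⬝ᵥ z :=
  Finset.sum_nonneg fun i _ => mul_self_nonneg (z i)

lemma sq_dotProduct_le (x y : n → ℝ) : (x ⬝ᵥ y) ^ 2 ≤ (x ⬝ᵥ x) * (y ⬝ᵥ y) := by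
  simpa [dotProduct, sq] using Finset.sum_mul_sq_le_sq_mul_sq Finset.univ x y

lemma half_dotProduct_self_sub_le (p q : n → ℝ) :
    (p ⬝ᵥ p) / 2 - q ⬝ᵥ q ≤ (p + q) ⬝ᵥ (p + q) := by
  simp only [dotProduct, Pi.add_apply, Finset.sum_div, ← Finset.sum_sub_distrib]
  exact Finset.sum_le_sum fun i _ => by nlinarith [sq_nonneg (p i + 2 * q i)]

lemma add_dotProduct_add_le (p q : n → ℝ) :
    (p + q) ⬝ᵥ (p + q) ≤ 2 * (p ⬝ᵥ p) + 2 * (q ⬝ᵥ q) := by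
  simp only [dotProduct, Pi.add_apply, Finset.mul_sum, ← Finset.sum_add_distrib]
  exact Finset.sum_le_sum fun i _ => by nlinarith [sq_nonneg (p i - q i)]

lemma sq_norm_le_dotProduct_self (z : n → ℝ) : ‖z‖ ^ 2 ≤ z ⬝ᵥ z := by
  suffices ‖z‖ ≤ √(z ⬝ᵥ z) from (Real.le_sqrt (norm_nonneg z) (dotProduct_self_nonneg z)).1 this
  refine (pi_norm_le_iff_of_nonneg (Real.sqrt_nonneg _)).2 fun i => Real.abs_le_sqrt ?_
  simpa [dotProduct, sq] using
    Finset.single_le_sum (fun j _ => mul_self_nonneg (z j)) (Finset.mem_univ i)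

lemma dotProduct_self_le_card_mul_sq_norm (z : n → ℝ) :
    z ⬝ᵥ z ≤ Fintype.card n * ‖z‖ ^ 2 := by
  calc z ⬝ᵥ z ≤ ∑ _i : n, ‖z‖ ^ 2 := Finset.sum_le_sum fun i _ => by
        have := norm_le_pi_norm z i
        rw [Real.norm_eq_abs] at this
        nlinarith [abs_nonneg (z i), abs_mul_abs_self (z i)]
    _ = _ := by simp

lemma mulVec_dotProduct_mulVec_le (A : Matrix n n ℝ) (z : n → ℝ) :
    (A *ᵥ z) ⬝ᵥ (A *ᵥ z) ≤ (Fintype.card n * ‖A‖) ^ 2 * (z ⬝ᵥ z) := by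
  have hrow (i : n) : (A *ᵥ z) i ^ 2 ≤ Fintype.card n * ‖A‖ ^ 2 * (z ⬝ᵥ z) :=
    calc (A *ᵥ z) i ^ 2 ≤ (A i ⬝ᵥ A i) * (z ⬝ᵥ z) := sq_dotProduct_le (A i) z
      _ ≤ _ := mul_le_mul_of_nonneg_right ((dotProduct_self_le_card_mul_sq_norm (A i)).trans
          (by gcongr; exact norm_le_pi_norm A i)) (dotProduct_self_nonneg z)
  calc (A *ᵥ z) ⬝ᵥ (A *ᵥ z) = ∑ i, (A *ᵥ z) i ^ 2 := by simp [dotProduct, sq]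
    _ ≤ ∑ _i : n, Fintype.card n * ‖A‖ ^ 2 * (z ⬝ᵥ z) := Finset.sum_le_sum fun i _ => hrow i
    _ = _ := by simp; ring

lemma abs_dotProduct_mulVec_le (A : Matrix n n ℝ) (z : n → ℝ) :
    |z ⬝ᵥ (A *ᵥ z)| ≤ Fintype.card n * ‖A‖ * (z ⬝ᵥ z) := by
  have hz := dotProduct_self_nonneg z
  refine abs_le.2 (abs_le_of_sq_le_sq' ?_ (by positivity))
  calc (z ⬝ᵥ (A *ᵥ z)) ^ 2 ≤ (z ⬝ᵥ z) * ((Fintype.card n * ‖A‖) ^ 2 * (z ⬝ᵥ z)) :=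
        (sq_dotProduct_le _ _).trans (by gcongr; exact mulVec_dotProduct_mulVec_le A z)
    _ = _ := by ring

lemma dotProduct_mul_transpose_mulVec_le {σ : Matrix n n ℝ} {c : ℝ} (hσ : ‖σ‖ ≤ c)
    (y : n → ℝ) : y ⬝ᵥ ((σ * σᵀ) *ᵥ y) ≤ (Fintype.card n * c) ^ 2 * (y ⬝ᵥ y) := by
  rw [← mulVec_mulVec, dotProduct_mulVec, ← mulVec_transpose]
  refine (mulVec_dotProduct_mulVec_le σᵀ y).trans
    (mul_le_mul_of_nonneg_right ?_ (dotProduct_self_nonneg y))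
  rw [norm_transpose]
  gcongr

lemma dotProduct_conj_mulVec (A Q : Matrix n n ℝ) (y : n → ℝ) :
    y ⬝ᵥ ((A * Q * Aᵀ) *ᵥ y) = (Aᵀ *ᵥ y) ⬝ᵥ (Q *ᵥ (Aᵀ *ᵥ y)) := by
  rw [← mulVec_mulVec, ← mulVec_mulVec, dotProduct_mulVec, ← mulVec_transpose]

lemma transpose_mulVec_dotProduct_le {A : Matrix n n ℝ} {c : ℝ}
    (h : ∀ u, (A *ᵥ u) ⬝ᵥ (A *ᵥ u) ≤ c * (u ⬝ᵥ u)) (y : n → ℝ) :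
    (Aᵀ *ᵥ y) ⬝ᵥ (Aᵀ *ᵥ y) ≤ c * (y ⬝ᵥ y) := by
  set w := Aᵀ *ᵥ y
  have hcs : (w ⬝ᵥ w) ^ 2 ≤ (y ⬝ᵥ y) * (c * (w ⬝ᵥ w)) :=
    calc (w ⬝ᵥ w) ^ 2 = (y ⬝ᵥ (A *ᵥ w)) ^ 2 := by rw [dotProduct_mulVec y A w, ← mulVec_transpose]
      _ ≤ (y ⬝ᵥ y) * ((A *ᵥ w) ⬝ᵥ (A *ᵥ w)) := sq_dotProduct_le _ _
      _ ≤ (y ⬝ᵥ y) * (c * (w ⬝ᵥ w)) := mul_le_mul_of_nonneg_left (h w) (dotProduct_self_nonneg y)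
  have hy : 0 ≤ c * (y ⬝ᵥ y) := (dotProduct_self_nonneg _).trans (h y)
  nlinarith [dotProduct_self_nonneg w]

lemma le_transpose_mulVec_dotProduct {A : Matrix n n ℝ} {c : ℝ} (hc : 0 < c)
    (h : ∀ u, c * (u ⬝ᵥ u) ≤ (A *ᵥ u) ⬝ᵥ (A *ᵥ u)) (y : n → ℝ) :
    c * (y ⬝ᵥ y) ≤ (Aᵀ *ᵥ y) ⬝ᵥ (Aᵀ *ᵥ y) := by
  classical
  have hinj : Function.Injective A.mulVec := by
    intro a b hab
    have h0 := h (a - b)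
    rw [mulVec_sub, hab, sub_self, dotProduct_zero] at h0
    exact sub_eq_zero.1 (dotProduct_self_eq_zero.1
      (le_antisymm (nonpos_of_mul_nonpos_right h0 hc) (dotProduct_self_nonneg _)))
  obtain ⟨u, rfl⟩ := mulVec_surjective_iff_isUnit.2 (mulVec_injective_iff_isUnit.1 hinj) y
  set y := A *ᵥ u
  have hcs : (y ⬝ᵥ y) ^ 2 ≤ ((Aᵀ *ᵥ y) ⬝ᵥ (Aᵀ *ᵥ y)) * (u ⬝ᵥ u) := by
    rw [dotProduct_mulVec y A u, ← mulVec_transpose]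
    exact sq_dotProduct_le _ _
  have hAy := dotProduct_self_nonneg (Aᵀ *ᵥ y)
  have key : c * (y ⬝ᵥ y) * (y ⬝ᵥ y) ≤ ((Aᵀ *ᵥ y) ⬝ᵥ (Aᵀ *ᵥ y)) * (y ⬝ᵥ y) := by
    nlinarith [mul_le_mul_of_nonneg_left (h u) hAy]
  nlinarith [dotProduct_self_nonneg y]

lemma half_mul_sub_le_dotProduct_sub_mulVec_add {A : Matrix n n ℝ} {c : ℝ}
    (hA : ∀ w, c * (w ⬝ᵥ w) ≤ (A *ᵥ w) ⬝ᵥ (A *ᵥ w)) (v x b : n → ℝ) :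
    c / 2 * ((v - x) ⬝ᵥ (v - x)) - (2 * ((A *ᵥ v - v) ⬝ᵥ (A *ᵥ v - v)) + 2 * (b ⬝ᵥ b)) ≤
      (v - (A *ᵥ x + b)) ⬝ᵥ (v - (A *ᵥ x + b)) := by
  have hsplit : v - (A *ᵥ x + b) = A *ᵥ (v - x) + -((A *ᵥ v - v) + b) := by
    rw [mulVec_sub]; abel
  have h := half_dotProduct_self_sub_le (A *ᵥ (v - x)) (-((A *ᵥ v - v) + b))
  rw [neg_dotProduct_neg] at h
  rw [hsplit]
  linarith [hA (v - x), add_dotProduct_add_le (A *ᵥ v - v) b]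

variable [DecidableEq n]

lemma IsHermitian.pow_card_le_det {K : Matrix n n ℝ} (hK : K.IsHermitian) {m : ℝ} (hm : 0 ≤ m)
    (h : ∀ y, m * (y ⬝ᵥ y) ≤ y ⬝ᵥ (K *ᵥ y)) : m ^ Fintype.card n ≤ K.det := by
  have hev (i : n) : m ≤ hK.eigenvalues i := by
    have hunit : (hK.eigenvectorBasis i).ofLp ⬝ᵥ (hK.eigenvectorBasis i).ofLp = 1 := by
      simpa [dotProduct, sq, hK.eigenvectorBasis.orthonormal.1 i] using
        (EuclideanSpace.real_norm_sq_eq (hK.eigenvectorBasis i)).symm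
    simpa [hK.eigenvalues_eq i, hunit] using h (hK.eigenvectorBasis i).ofLp
  rw [hK.det_eq_prod_eigenvalues, ← Finset.card_univ, ← Finset.prod_const]
  exact Finset.prod_le_prod (fun _ _ => hm) fun i _ => hev i

lemma PosDef.dotProduct_self_div_le_dotProduct_inv_mulVec {K : Matrix n n ℝ} (hK : K.PosDef)
    {M : ℝ} (hM : 0 < M) (h : ∀ y, y ⬝ᵥ (K *ᵥ y) ≤ M * (y ⬝ᵥ y)) (e : n → ℝ) :
    (e ⬝ᵥ e) / M ≤ e ⬝ᵥ (K⁻¹ *ᵥ e) := by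
  set u := K⁻¹ *ᵥ e
  have hKu : K *ᵥ u = e := by
    rw [mulVec_mulVec, mul_nonsing_inv _ ((isUnit_iff_isUnit_det K).1 hK.isUnit), one_mulVec]
  have hsymm : u ⬝ᵥ (K *ᵥ e) = e ⬝ᵥ e := by
    rw [dotProduct_mulVec, ← mulVec_transpose, ← conjTranspose_eq_transpose_of_trivial, hK.1.eq,
      hKu]
  have hnonneg (x : n → ℝ) : 0 ≤ x ⬝ᵥ (K *ᵥ x) := by
    simpa using hK.posSemidef.dotProduct_mulVec_nonneg x
  have hcs := (toBilin' K).apply_mul_apply_le_of_forall_zero_le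
    (fun x => by rw [toBilin'_apply']; exact hnonneg x) e u
  simp only [toBilin'_apply', hKu, hsymm, dotProduct_comm u e] at hcs
  have hue : 0 ≤ e ⬝ᵥ u := by simpa [hKu, dotProduct_comm] using hnonneg u
  have key : (e ⬝ᵥ e) * (e ⬝ᵥ e) ≤ (e ⬝ᵥ u * M) * (e ⬝ᵥ e) := by
    nlinarith [mul_le_mul_of_nonneg_right (h e) hue]
  rw [div_le_iff₀ hM]
  nlinarith [dotProduct_self_nonneg e, mul_nonneg hue hM.le]

lemma IsHermitian.det_rpow_mul_exp_le {K : Matrix n n ℝ} (hK : K.IsHermitian) {m M : ℝ}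
    (hm : 0 < m) (hM : 0 < M) (hlow : ∀ y, m * (y ⬝ᵥ y) ≤ y ⬝ᵥ (K *ᵥ y))
    (hup : ∀ y, y ⬝ᵥ (K *ᵥ y) ≤ M * (y ⬝ᵥ y)) (e : n → ℝ) :
    K.det ^ (-(1 : ℝ) / 2) * Real.exp (-(1 / 2) * (e ⬝ᵥ (K⁻¹ *ᵥ e))) ≤
      m ^ (-(Fintype.card n : ℝ) / 2) * Real.exp (-(e ⬝ᵥ e) / (2 * M)) := by
  have hPD : K.PosDef := posDef_iff_dotProduct_mulVec.2 ⟨hK, fun x hx => by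
    have hxx : 0 < x ⬝ᵥ x :=
      (dotProduct_self_nonneg x).lt_of_ne (Ne.symm (mt dotProduct_self_eq_zero.1 hx))
    simpa using (mul_pos hm hxx).trans_le (hlow x)⟩
  have hdet : m ^ (-(Fintype.card n : ℝ) / 2) = (m ^ Fintype.card n) ^ (-(1 : ℝ) / 2) := by
    rw [← Real.rpow_natCast, ← Real.rpow_mul hm.le]
    ring_nf
  rw [hdet]
  refine mul_le_mul (Real.rpow_le_rpow_of_nonpos (by positivity) (hK.pow_card_le_det hm.le hlow)
    (by norm_num)) (Real.exp_le_exp.2 ?_) (Real.exp_pos _).le (by positivity)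
  have := hPD.dotProduct_self_div_le_dotProduct_inv_mulVec hM hup e
  rw [neg_div, mul_comm 2 M, ← div_div]
  linarith

lemma IsHermitian.gaussian_density_le {K : Matrix n n ℝ} (hK : K.IsHermitian)
    {m M t T D c W : ℝ} (hm : 0 < m) (hM : 0 < M) (ht : 0 < t) (htT : t ≤ T) (hD : 0 ≤ D)
    (hlow : ∀ y, m * t * (y ⬝ᵥ y) ≤ y ⬝ᵥ (K *ᵥ y))
    (hup : ∀ y, y ⬝ᵥ (K *ᵥ y) ≤ M * t * (y ⬝ᵥ y))
    {e : n → ℝ} (he : c / 2 * W - D * t ^ 2 ≤ e ⬝ᵥ e) :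
    (2 * π) ^ (-(Fintype.card n : ℝ) / 2) * K.det ^ (-(1 : ℝ) / 2) *
        Real.exp (-(1 / 2) * (e ⬝ᵥ (K⁻¹ *ᵥ e))) ≤
      (2 * π) ^ (-(Fintype.card n : ℝ) / 2) * m ^ (-(Fintype.card n : ℝ) / 2) *
        Real.exp (D * T / (2 * M)) * t ^ (-(Fintype.card n : ℝ) / 2) *
          Real.exp (-(c / (4 * M)) * W / t) := by
  have hK' := hK.det_rpow_mul_exp_le (mul_pos hm ht) (mul_pos hM ht)
    (fun y => by simpa only [mul_assoc] using hlow y)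
    (fun y => by simpa only [mul_assoc] using hup y) e
  rw [Real.mul_rpow hm.le ht.le] at hK'
  have hexp : Real.exp (-(e ⬝ᵥ e) / (2 * (M * t))) ≤
      Real.exp (D * T / (2 * M)) * Real.exp (-(c / (4 * M)) * W / t) := by
    rw [← Real.exp_add, Real.exp_le_exp]
    have h1 : -(e ⬝ᵥ e) / (2 * (M * t)) ≤ -(c / 2 * W - D * t ^ 2) / (2 * (M * t)) := by
      gcongr
    have h2 : -(c / 2 * W - D * t ^ 2) / (2 * (M * t)) =
        D * t / (2 * M) + -(c / (4 * M)) * W / t := by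
      field_simp
      ring
    have h3 : D * t / (2 * M) ≤ D * T / (2 * M) := by gcongr
    linarith
  calc _ = (2 * π) ^ (-(Fintype.card n : ℝ) / 2) *
        (K.det ^ (-(1 : ℝ) / 2) * Real.exp (-(1 / 2) * (e ⬝ᵥ (K⁻¹ *ᵥ e)))) := by ring
    _ ≤ (2 * π) ^ (-(Fintype.card n : ℝ) / 2) * (m ^ (-(Fintype.card n : ℝ) / 2) *
        t ^ (-(Fintype.card n : ℝ) / 2) * (Real.exp (D * T / (2 * M)) *
          Real.exp (-(c / (4 * M)) * W / t))) :=
      mul_le_mul_of_nonneg_left (hK'.trans (mul_le_mul_of_nonneg_left hexp (by positivity)))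
        (by positivity)
    _ = _ := by ring

end Matrix

lemma IsCompact.exists_pos_bound_of_continuousOn {α E : Type*} [TopologicalSpace α]
    [SeminormedAddGroup E] {s : Set α} {f : α → E} (hs : IsCompact s) (hf : ContinuousOn f s) :
    ∃ C > 0, ∀ x ∈ s, ‖f x‖ ≤ C := by
  obtain ⟨C, hC⟩ := hs.exists_bound_of_continuousOn hf
  exact ⟨max C 1, by positivity, fun x hx => (hC x hx).trans (le_max_left _ _)⟩

section Gronwall

variable {g g' : ℝ → ℝ} {κ a b : ℝ}

lemma abs_le_abs_mul_exp_of_abs_deriv_le (hab : a ≤ b)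
    (hg : ∀ t ∈ Icc a b, HasDerivAt g (g' t) t) (h : ∀ t ∈ Icc a b, |g' t| ≤ κ * |g t|) :
    |g b| ≤ |g a| * exp (κ * (b - a)) := by
  simpa [gronwallBound_ε0] using norm_le_gronwallBound_of_norm_deriv_right_le
    (fun t ht => (hg t ht).continuousAt.continuousWithinAt)
    (fun t ht => (hg t (Ico_subset_Icc_self ht)).hasDerivWithinAt) le_rfl
    (K := κ) (ε := 0) (fun t ht => by simpa using h t (Ico_subset_Icc_self ht)) b ⟨hab, le_rfl⟩

lemma abs_le_abs_mul_exp_of_abs_deriv_le_backward (hab : a ≤ b)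
    (hg : ∀ t ∈ Icc a b, HasDerivAt g (g' t) t) (h : ∀ t ∈ Icc a b, |g' t| ≤ κ * |g t|) :
    |g a| ≤ |g b| * exp (κ * (b - a)) := by
  have hmem {t} (ht : t ∈ Icc a b) : a + b - t ∈ Icc a b :=
    ⟨by linarith [ht.2], by linarith [ht.1]⟩
  simpa using abs_le_abs_mul_exp_of_abs_deriv_le (g := fun t => g (a + b - t))
    (g' := fun t => -g' (a + b - t)) hab (fun t ht => (hg _ (hmem ht)).comp_const_sub _ _)
    (fun t ht => by simpa using h _ (hmem ht))

end Gronwall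

noncomputable def Matrix.mulVecCLM {m n : Type*} [Fintype m] [Fintype n] (y : n → ℝ) :
    Matrix m n ℝ →L[ℝ] m → ℝ :=
  LinearMap.toContinuousLinearMap
    { toFun := fun M => M *ᵥ y
      map_add' := fun M N => add_mulVec M N y
      map_smul' := fun c M => smul_mulVec c M y }

lemma HasDerivAt.mulVec_const {m n : Type*} [Fintype m] [Fintype n] {Ψ : ℝ → Matrix m n ℝ}
    {Ψ' : Matrix m n ℝ} {t : ℝ} (h : HasDerivAt Ψ Ψ' t) (y : n → ℝ) :
    HasDerivAt (fun r => Ψ r *ᵥ y) (Ψ' *ᵥ y) t := by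
  exact (mulVecCLM y).hasFDerivAt.comp_hasDerivAt t h

section LinearODE

variable {n : Type*} [Fintype n] {a b c : ℝ}

lemma HasDerivAt.dotProduct_self {z : ℝ → n → ℝ} {z' : n → ℝ} {t : ℝ} (hz : HasDerivAt z z' t) :
    HasDerivAt (fun r => z r ⬝ᵥ z r) (2 * (z t ⬝ᵥ z')) t := by
  have hi (i : n) : HasDerivAt (fun r => z r i) (z' i) t := hasDerivAt_pi.1 hz i
  have h := HasDerivAt.fun_sum (u := Finset.univ) fun i _ => (hi i).mul (hi i)
  rw [show 2 * (z t ⬝ᵥ z') = ∑ i, (z' i * z t i + z t i * z' i) by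
    simp only [dotProduct, Finset.mul_sum]; exact Finset.sum_congr rfl fun i _ => by ring]
  exact h

lemma dotProduct_self_bounds_of_hasDerivAt {z : ℝ → n → ℝ} {B : ℝ → Matrix n n ℝ}
    (hab : a ≤ b) (hz : ∀ t ∈ Icc a b, HasDerivAt z (B t *ᵥ z t) t)
    (hB : ∀ t ∈ Icc a b, ‖B t‖ ≤ c) :
    exp (-(2 * Fintype.card n * c * (b - a))) * (z a ⬝ᵥ z a) ≤ z b ⬝ᵥ z b ∧
      z b ⬝ᵥ z b ≤ exp (2 * Fintype.card n * c * (b - a)) * (z a ⬝ᵥ z a) := by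
  have hg (t) (ht : t ∈ Icc a b) := (hz t ht).dotProduct_self
  have hbound (t) (ht : t ∈ Icc a b) :
      |2 * (z t ⬝ᵥ (B t *ᵥ z t))| ≤ 2 * Fintype.card n * c * |z t ⬝ᵥ z t| := by
    rw [abs_mul, abs_two, abs_of_nonneg (dotProduct_self_nonneg _)]
    have hz := dotProduct_self_nonneg (z t)
    have : Fintype.card n * ‖B t‖ * (z t ⬝ᵥ z t) ≤ Fintype.card n * c * (z t ⬝ᵥ z t) := by
      gcongr; exact hB t ht
    linarith [abs_dotProduct_mulVec_le (B t) (z t)]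
  have hup := abs_le_abs_mul_exp_of_abs_deriv_le hab hg hbound
  have hlow := abs_le_abs_mul_exp_of_abs_deriv_le_backward hab hg hbound
  simp only [abs_of_nonneg (dotProduct_self_nonneg _)] at hup hlow
  refine ⟨?_, by linarith⟩
  rw [Real.exp_neg, inv_mul_le_iff₀ (exp_pos _)]
  linarith

lemma dotProduct_mulVec_bounds_of_hasDerivAt {Ψ B : ℝ → Matrix n n ℝ}
    (hab : a ≤ b) (hΨ : ∀ t ∈ Icc a b, HasDerivAt Ψ (B t * Ψ t) t)
    (hB : ∀ t ∈ Icc a b, ‖B t‖ ≤ c) (y : n → ℝ) :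
    exp (-(2 * Fintype.card n * c * (b - a))) * ((Ψ a *ᵥ y) ⬝ᵥ (Ψ a *ᵥ y)) ≤
        (Ψ b *ᵥ y) ⬝ᵥ (Ψ b *ᵥ y) ∧
      (Ψ b *ᵥ y) ⬝ᵥ (Ψ b *ᵥ y) ≤
        exp (2 * Fintype.card n * c * (b - a)) * ((Ψ a *ᵥ y) ⬝ᵥ (Ψ a *ᵥ y)) := by
  refine dotProduct_self_bounds_of_hasDerivAt (z := fun t => Ψ t *ᵥ y) hab (fun t ht => ?_) hB
  rw [mulVec_mulVec]
  exact (hΨ t ht).mulVec_const y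

end LinearODE

section VectorBounds

variable {n : Type*} [Fintype n] {a b R : ℝ}

lemma norm_le_sqrt_of_dotProduct_self_le {w : n → ℝ} (h : w ⬝ᵥ w ≤ R) : ‖w‖ ≤ √R :=
  Real.le_sqrt_of_sq_le ((sq_norm_le_dotProduct_self w).trans h)

lemma dotProduct_self_le_of_norm_le_sqrt_mul {w : n → ℝ} (hR : 0 ≤ R) {t : ℝ}
    (h : ‖w‖ ≤ √R * t) : w ⬝ᵥ w ≤ Fintype.card n * R * t ^ 2 := by
  calc w ⬝ᵥ w ≤ Fintype.card n * ‖w‖ ^ 2 := dotProduct_self_le_card_mul_sq_norm w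
    _ ≤ Fintype.card n * (√R * t) ^ 2 := by gcongr
    _ = _ := by rw [mul_pow, Real.sq_sqrt hR]; ring

lemma dotProduct_self_intervalIntegral_le {f : ℝ → n → ℝ} (hab : a ≤ b)
    (h : ∀ τ ∈ Icc a b, f τ ⬝ᵥ f τ ≤ R) :
    (∫ τ in a..b, f τ) ⬝ᵥ (∫ τ in a..b, f τ) ≤ Fintype.card n * R * (b - a) ^ 2 := by
  have hR : 0 ≤ R := (dotProduct_self_nonneg _).trans (h a ⟨le_rfl, hab⟩)
  refine dotProduct_self_le_of_norm_le_sqrt_mul hR ?_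
  refine (intervalIntegral.norm_integral_le_of_norm_le_const fun τ hτ => ?_).trans_eq
    (by rw [abs_of_nonneg (sub_nonneg.2 hab)])
  rw [uIoc_of_le hab] at hτ
  exact norm_le_sqrt_of_dotProduct_self_le (h τ (Ioc_subset_Icc_self hτ))

lemma dotProduct_self_sub_le_of_hasDerivAt {z z' : ℝ → n → ℝ} (hab : a ≤ b)
    (hz : ∀ t ∈ Icc a b, HasDerivAt z (z' t) t) (h : ∀ t ∈ Icc a b, z' t ⬝ᵥ z' t ≤ R) :
    (z b - z a) ⬝ᵥ (z b - z a) ≤ Fintype.card n * R * (b - a) ^ 2 := by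
  have hR : 0 ≤ R := (dotProduct_self_nonneg _).trans (h a ⟨le_rfl, hab⟩)
  refine dotProduct_self_le_of_norm_le_sqrt_mul hR ?_
  exact norm_image_sub_le_of_norm_deriv_le_segment' (fun t ht => (hz t ht).hasDerivWithinAt)
    (fun t ht => norm_le_sqrt_of_dotProduct_self_le (h t (Ico_subset_Icc_self ht))) b
    ⟨hab, le_rfl⟩

end VectorBounds

namespace Matrix

variable {n : Type*} [Fintype n]

-- The entrywise norm is only a local instance, so instance search cannot assemble this itself.
noncomputable instance instENormedAddMonoid : ENormedAddMonoid (Matrix n n ℝ) :=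
  NormedAddGroup.toENormedAddMonoid

noncomputable def quadFormCLM (y : n → ℝ) : Matrix n n ℝ →L[ℝ] ℝ :=
  LinearMap.toContinuousLinearMap
    { toFun := fun M => y ⬝ᵥ (M *ᵥ y)
      map_add' := fun M N => by rw [add_mulVec, dotProduct_add]
      map_smul' := fun c M => by rw [smul_mulVec, dotProduct_smul]; rfl }

noncomputable def transposeCLM : Matrix n n ℝ →L[ℝ] Matrix n n ℝ :=
  LinearMap.toContinuousLinearMap (transposeLinearEquiv n n ℝ ℝ).toLinearMap

section IntervalIntegral

variable {a b c : ℝ} {F : ℝ → Matrix n n ℝ}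

lemma transpose_intervalIntegral (hF : IntervalIntegrable F volume a b) :
    (∫ τ in a..b, F τ)ᵀ = ∫ τ in a..b, (F τ)ᵀ :=
  (transposeCLM.intervalIntegral_comp_comm hF).symm

lemma mul_dotProduct_le_dotProduct_intervalIntegral_mulVec (hab : a ≤ b)
    (hF : IntervalIntegrable F volume a b) {y : n → ℝ}
    (h : ∀ τ ∈ Icc a b, c * (y ⬝ᵥ y) ≤ y ⬝ᵥ (F τ *ᵥ y)) :
    c * (b - a) * (y ⬝ᵥ y) ≤ y ⬝ᵥ ((∫ τ in a..b, F τ) *ᵥ y) := by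
  have hq : IntervalIntegrable (fun τ => quadFormCLM y (F τ)) volume a b :=
    ⟨(quadFormCLM y).integrable_comp hF.1, (quadFormCLM y).integrable_comp hF.2⟩
  calc c * (b - a) * (y ⬝ᵥ y) = ∫ _ in a..b, c * (y ⬝ᵥ y) := by simp; ring
    _ ≤ ∫ τ in a..b, quadFormCLM y (F τ) := integral_mono_on hab (by simp) hq h
    _ = _ := (quadFormCLM y).intervalIntegral_comp_comm hF

lemma dotProduct_intervalIntegral_mulVec_le_mul (hab : a ≤ b)
    (hF : IntervalIntegrable F volume a b) {y : n → ℝ}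
    (h : ∀ τ ∈ Icc a b, y ⬝ᵥ (F τ *ᵥ y) ≤ c * (y ⬝ᵥ y)) :
    y ⬝ᵥ ((∫ τ in a..b, F τ) *ᵥ y) ≤ c * (b - a) * (y ⬝ᵥ y) := by
  have hq : IntervalIntegrable (fun τ => quadFormCLM y (F τ)) volume a b :=
    ⟨(quadFormCLM y).integrable_comp hF.1, (quadFormCLM y).integrable_comp hF.2⟩
  calc y ⬝ᵥ ((∫ τ in a..b, F τ) *ᵥ y) = ∫ τ in a..b, quadFormCLM y (F τ) :=
        ((quadFormCLM y).intervalIntegral_comp_comm hF).symm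
    _ ≤ ∫ _ in a..b, c * (y ⬝ᵥ y) := integral_mono_on hab hq (by simp) h
    _ = c * (b - a) * (y ⬝ᵥ y) := by simp; ring

end IntervalIntegral

section Conjugation

variable {A Q : ℝ → Matrix n n ℝ} {s T : ℝ}

lemma isHermitian_intervalIntegral_conj (hQ : ∀ τ, (Q τ)ᵀ = Q τ)
    (hF : IntervalIntegrable (fun τ => A τ * Q τ * (A τ)ᵀ) volume s T) :
    (∫ τ in s..T, A τ * Q τ * (A τ)ᵀ).IsHermitian := by
  rw [IsHermitian, conjTranspose_eq_transpose_of_trivial, transpose_intervalIntegral hF]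
  simp only [transpose_mul, transpose_transpose, hQ, Matrix.mul_assoc]

lemma intervalIntegral_conj_dotProduct_bounds {c₀ c₁ η C : ℝ} (hsT : s ≤ T) (hc₀ : 0 < c₀)
    (hη : 0 ≤ η) (hC : 0 ≤ C)
    (hA : ∀ τ ∈ Icc s T, ∀ y, c₀ * (y ⬝ᵥ y) ≤ (A τ *ᵥ y) ⬝ᵥ (A τ *ᵥ y) ∧
      (A τ *ᵥ y) ⬝ᵥ (A τ *ᵥ y) ≤ c₁ * (y ⬝ᵥ y))
    (hQ : ∀ τ ∈ Icc s T, ∀ y, η * (y ⬝ᵥ y) ≤ y ⬝ᵥ (Q τ *ᵥ y) ∧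
      y ⬝ᵥ (Q τ *ᵥ y) ≤ C * (y ⬝ᵥ y))
    (hF : IntervalIntegrable (fun τ => A τ * Q τ * (A τ)ᵀ) volume s T) (y : n → ℝ) :
    η * c₀ * (T - s) * (y ⬝ᵥ y) ≤ y ⬝ᵥ ((∫ τ in s..T, A τ * Q τ * (A τ)ᵀ) *ᵥ y) ∧
      y ⬝ᵥ ((∫ τ in s..T, A τ * Q τ * (A τ)ᵀ) *ᵥ y) ≤ C * c₁ * (T - s) * (y ⬝ᵥ y) := by
  constructor
  · refine mul_dotProduct_le_dotProduct_intervalIntegral_mulVec hsT hF fun τ hτ => ?_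
    rw [dotProduct_conj_mulVec, mul_assoc]
    exact (mul_le_mul_of_nonneg_left
      (le_transpose_mulVec_dotProduct hc₀ (fun u => (hA τ hτ u).1) y) hη).trans (hQ τ hτ _).1
  · refine dotProduct_intervalIntegral_mulVec_le_mul hsT hF fun τ hτ => ?_
    rw [dotProduct_conj_mulVec, mul_assoc]
    exact (hQ τ hτ _).2.trans (mul_le_mul_of_nonneg_left
      (transpose_mulVec_dotProduct_le (fun u => (hA τ hτ u).2) y) hC)

end Conjugation

end Matrix

section FundamentalMatrix

variable {n : Type*} [Fintype n] [DecidableEq n] {B : ℝ → Matrix n n ℝ}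
  {Φ : ℝ → ℝ → Matrix n n ℝ}

lemma fundamental_dotProduct_bounds (hΦid : ∀ s, Φ s s = 1)
    (hΦderiv : ∀ t s, HasDerivAt (fun r => Φ r s) (B t * Φ t s) t) {T c : ℝ}
    (hB : ∀ t ∈ Icc 0 T, ‖B t‖ ≤ c) {s r : ℝ} (hs : 0 ≤ s) (hsr : s ≤ r) (hr : r ≤ T)
    (y : n → ℝ) :
    exp (-(2 * Fintype.card n * c * T)) * (y ⬝ᵥ y) ≤ (Φ r s *ᵥ y) ⬝ᵥ (Φ r s *ᵥ y) ∧
      (Φ r s *ᵥ y) ⬝ᵥ (Φ r s *ᵥ y) ≤ exp (2 * Fintype.card n * c * T) * (y ⬝ᵥ y) := by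
  have hc : 0 ≤ c := (norm_nonneg _).trans (hB s ⟨hs, hsr.trans hr⟩)
  have hκ : 2 * Fintype.card n * c * (r - s) ≤ 2 * Fintype.card n * c * T := by
    gcongr; linarith
  obtain ⟨hlow, hup⟩ := dotProduct_mulVec_bounds_of_hasDerivAt hsr (fun t _ => hΦderiv t s)
    (fun t ht => hB t ⟨hs.trans ht.1, ht.2.trans hr⟩) y
  rw [hΦid, one_mulVec] at hlow hup
  have hy := dotProduct_self_nonneg y
  exact ⟨le_trans (by gcongr) hlow, hup.trans (by gcongr)⟩

lemma dotProduct_self_fundamental_mulVec_sub_le (hΦid : ∀ s, Φ s s = 1)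
    (hΦderiv : ∀ t s, HasDerivAt (fun r => Φ r s) (B t * Φ t s) t) {s T cB c₁ : ℝ} (hsT : s ≤ T)
    (hB : ∀ t ∈ Icc s T, ‖B t‖ ≤ cB) {v : n → ℝ}
    (hΦ : ∀ r ∈ Icc s T, (Φ r s *ᵥ v) ⬝ᵥ (Φ r s *ᵥ v) ≤ c₁ * (v ⬝ᵥ v)) :
    (Φ T s *ᵥ v - v) ⬝ᵥ (Φ T s *ᵥ v - v) ≤
      Fintype.card n * ((Fintype.card n * cB) ^ 2 * (c₁ * (v ⬝ᵥ v))) * (T - s) ^ 2 := by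
  have h := dotProduct_self_sub_le_of_hasDerivAt (z := fun r => Φ r s *ᵥ v)
    (z' := fun t => B t *ᵥ (Φ t s *ᵥ v)) (R := (Fintype.card n * cB) ^ 2 * (c₁ * (v ⬝ᵥ v))) hsT
    (fun t _ => by rw [mulVec_mulVec]; exact (hΦderiv t s).mulVec_const v) fun t ht =>
      (mulVec_dotProduct_mulVec_le _ _).trans (mul_le_mul (by gcongr; exact hB t ht) (hΦ t ht)
        (dotProduct_self_nonneg _) (by positivity))
  simpa [hΦid] using h

lemma mean_dotProduct_lower_bound (hΦid : ∀ s, Φ s s = 1)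
    (hΦderiv : ∀ t s, HasDerivAt (fun r => Φ r s) (B t * Φ t s) t) {β : ℝ → n → ℝ}
    {s T c₀ c₁ cB cβ : ℝ} (hsT : s ≤ T) (hc₁ : 0 ≤ c₁)
    (hB : ∀ t ∈ Icc s T, ‖B t‖ ≤ cB) (hβ : ∀ t ∈ Icc s T, ‖β t‖ ≤ cβ)
    (hΦ : ∀ τ r, s ≤ τ → τ ≤ r → r ≤ T → ∀ y, c₀ * (y ⬝ᵥ y) ≤ (Φ r τ *ᵥ y) ⬝ᵥ (Φ r τ *ᵥ y) ∧
      (Φ r τ *ᵥ y) ⬝ᵥ (Φ r τ *ᵥ y) ≤ c₁ * (y ⬝ᵥ y))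
    (v x : n → ℝ) :
    c₀ / 2 * ((v - x) ⬝ᵥ (v - x)) - 2 * Fintype.card n * c₁ *
        ((Fintype.card n * cB) ^ 2 * (v ⬝ᵥ v) + Fintype.card n * cβ ^ 2) * (T - s) ^ 2 ≤
      (v - (Φ T s *ᵥ x + ∫ τ in s..T, Φ T τ *ᵥ β τ)) ⬝ᵥ
        (v - (Φ T s *ᵥ x + ∫ τ in s..T, Φ T τ *ᵥ β τ)) := by
  have hdrift := dotProduct_self_fundamental_mulVec_sub_le hΦid hΦderiv hsT hB
    fun r hr => (hΦ s r le_rfl hr.1 hr.2 v).2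
  have hforcing := dotProduct_self_intervalIntegral_le (f := fun τ => Φ T τ *ᵥ β τ)
    (R := c₁ * (Fintype.card n * cβ ^ 2)) hsT fun τ hτ =>
      (hΦ τ T hτ.1 hτ.2 le_rfl _).2.trans (mul_le_mul_of_nonneg_left
        ((dotProduct_self_le_card_mul_sq_norm _).trans (by gcongr; exact hβ τ hτ)) hc₁)
  have := half_mul_sub_le_dotProduct_sub_mulVec_add (fun w => (hΦ s T le_rfl hsT le_rfl w).1)
    v x (∫ τ in s..T, Φ T τ *ᵥ β τ)
  linarith

end FundamentalMatrix

theorem stmt_7_general {d : ℕ} (hd : 1 ≤ d) (T : ℝ) (v : Fin d → ℝ)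
    (Btil : ℝ → Matrix (Fin d) (Fin d) ℝ) (βtil : ℝ → Fin d → ℝ)
    (σtil : ℝ → Matrix (Fin d) (Fin d) ℝ)
    (hB : ContDiffOn ℝ 1 Btil (Set.Icc 0 T))
    (hβ : ContDiffOn ℝ 1 βtil (Set.Icc 0 T))
    (Lσ : NNReal) (hσ : LipschitzOnWith Lσ σtil (Set.Icc 0 T))
    (atil : ℝ → Matrix (Fin d) (Fin d) ℝ)
    (hatil : ∀ s, atil s = σtil s * (σtil s)ᵀ)
    (η : ℝ) (hη : 0 < η)
    (hell : ∀ s ∈ Set.Icc (0 : ℝ) T, ∀ y : Fin d → ℝ,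
      η * (y ⬝ᵥ y) ≤ y ⬝ᵥ (atil s *ᵥ y))
    -- `Φ` is the fundamental matrix of the linear ODE `x' = B̃(t)x`
    (Φ : ℝ → ℝ → Matrix (Fin d) (Fin d) ℝ)
    (hΦid : ∀ s, Φ s s = 1)
    (hΦderiv : ∀ t s : ℝ, HasDerivAt (fun r => Φ r s) (Btil t * Φ t s) t)
    -- mean and covariance of the conditioned Gaussian law
    (μ : ℝ → (Fin d → ℝ) → Fin d → ℝ) (K : ℝ → Matrix (Fin d) (Fin d) ℝ)
    (hμ : ∀ s x, μ s x = Φ T s *ᵥ x + ∫ τ in s..T, Φ T τ *ᵥ βtil τ)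
    (hK : ∀ s, K s = ∫ τ in s..T, Φ T τ * atil τ * (Φ T τ)ᵀ)
    -- the transition density `p̃(s, x) = p̃(s, x; T, v)`
    (ptil : ℝ → (Fin d → ℝ) → ℝ)
    (hptil : ∀ s x, ptil s x =
      (2 * π) ^ (-(d : ℝ) / 2) * (K s).det ^ (-(1 : ℝ) / 2) *
        Real.exp (-(1 / 2) * ((v - μ s x) ⬝ᵥ ((K s)⁻¹ *ᵥ (v - μ s x))))) :
    ∃ C > (0 : ℝ), ∃ Λ > (0 : ℝ), ∀ s ∈ Set.Ico (0 : ℝ) T, ∀ x : Fin d → ℝ,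
      ptil s x ≤ C * (T - s) ^ (-(d : ℝ) / 2) *
        Real.exp (-Λ * ((v - x) ⬝ᵥ (v - x)) / (T - s)) := by
  have : Nonempty (Fin d) := ⟨⟨0, hd⟩⟩
  obtain ⟨cB, -, hBbd⟩ := isCompact_Icc.exists_pos_bound_of_continuousOn hB.continuousOn
  obtain ⟨cσ, hcσ, hσbd⟩ := isCompact_Icc.exists_pos_bound_of_continuousOn hσ.continuousOn
  obtain ⟨cβ, -, hβbd⟩ := isCompact_Icc.exists_pos_bound_of_continuousOn hβ.continuousOn
  have hflow := fun τ r (hτ : 0 ≤ τ) => fundamental_dotProduct_bounds hΦid hΦderiv hBbd hτ (r := r)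
  set c₀ := Real.exp (-(2 * Fintype.card (Fin d) * cB * T))
  set c₁ := Real.exp (2 * Fintype.card (Fin d) * cB * T)
  set M := (Fintype.card (Fin d) * cσ) ^ 2 * c₁
  set D := 2 * Fintype.card (Fin d) * c₁ *
    ((Fintype.card (Fin d) * cB) ^ 2 * (v ⬝ᵥ v) + Fintype.card (Fin d) * cβ ^ 2)
  have hD : 0 ≤ D := by have := dotProduct_self_nonneg v; positivity
  refine ⟨(2 * π) ^ (-(d : ℝ) / 2) * (η * c₀) ^ (-(d : ℝ) / 2) * Real.exp (D * T / (2 * M)),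
    by positivity, c₀ / (4 * M), by positivity, fun s hs x => ?_⟩
  have hIcc {t} (ht : t ∈ Icc s T) : t ∈ Icc 0 T := ⟨hs.1.trans ht.1, ht.2⟩
  rw [hptil, hK, hμ]
  by_cases hF : IntervalIntegrable (fun τ => Φ T τ * atil τ * (Φ T τ)ᵀ) volume s T
  · have hKb := intervalIntegral_conj_dotProduct_bounds (A := fun τ => Φ T τ) hs.2.le
      (Real.exp_pos _) hη.le (by positivity) (fun τ hτ => hflow τ T (hIcc hτ).1 hτ.2 le_rfl)
      (fun τ hτ y => ⟨hell τ (hIcc hτ) y,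
        hatil τ ▸ dotProduct_mul_transpose_mulVec_le (hσbd τ (hIcc hτ)) y⟩) hF
    have hmean := mean_dotProduct_lower_bound hΦid hΦderiv hs.2.le (Real.exp_pos _).le
      (fun t ht => hBbd t (hIcc ht)) (fun t ht => hβbd t (hIcc ht))
      (fun τ r hτ => hflow τ r (hs.1.trans hτ)) v x
    have h := (isHermitian_intervalIntegral_conj (fun τ => by
      rw [hatil, transpose_mul, transpose_transpose]) hF).gaussian_density_le (m := η * c₀)
      (M := M) (T := T) (mul_pos hη (Real.exp_pos _)) (by positivity) (sub_pos.2 hs.2)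
      (by linarith [hs.1]) hD (fun y => (hKb y).1) (fun y => (hKb y).2) hmean
    rwa [Fintype.card_fin] at h
  -- A non-integrable integrand gives `K s = 0`, and `0 ^ (-1 / 2) = 0` in Lean.
  · rw [intervalIntegral.integral_undef hF, det_zero, Real.zero_rpow (by norm_num)]
    simp only [mul_zero, zero_mul]
    have := Real.rpow_nonneg (sub_nonneg.2 hs.2.le) (-(d : ℝ) / 2)
    positivity

/-- Lemma 5.4: Gaussian-type upper bound for the transition density of the
linear SDE `dX̃ = (B̃(t)X̃ + β̃(t))dt + σ̃(t)dW_t`: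
`p̃(s,x;T,v) ≤ C (T-s)^{-d/2} exp(-Λ ‖v-x‖²/(T-s))`. -/
theorem stmt_7 {d : ℕ} (hd : 1 ≤ d) (T : ℝ) (hT : 0 < T) (v : Fin d → ℝ)
    (Btil : ℝ → Matrix (Fin d) (Fin d) ℝ) (βtil : ℝ → Fin d → ℝ)
    (σtil : ℝ → Matrix (Fin d) (Fin d) ℝ)
    (hB : ContDiffOn ℝ 1 Btil (Set.Icc 0 T))
    (hβ : ContDiffOn ℝ 1 βtil (Set.Icc 0 T))
    (Lσ : NNReal) (hσ : LipschitzOnWith Lσ σtil (Set.Icc 0 T))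
    (atil : ℝ → Matrix (Fin d) (Fin d) ℝ)
    (hatil : ∀ s, atil s = σtil s * (σtil s)ᵀ)
    (η : ℝ) (hη : 0 < η)
    (hell : ∀ s ∈ Set.Icc (0 : ℝ) T, ∀ y : Fin d → ℝ,
      η * (y ⬝ᵥ y) ≤ y ⬝ᵥ (atil s *ᵥ y))
    -- `Φ` is the fundamental matrix of the linear ODE `x' = B̃(t)x`
    (Φ : ℝ → ℝ → Matrix (Fin d) (Fin d) ℝ)
    (hΦid : ∀ s, Φ s s = 1)
    (hΦderiv : ∀ t s : ℝ, HasDerivAt (fun r => Φ r s) (Btil t * Φ t s) t)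
    -- mean and covariance of the conditioned Gaussian law
    (μ : ℝ → (Fin d → ℝ) → Fin d → ℝ) (K : ℝ → Matrix (Fin d) (Fin d) ℝ)
    (hμ : ∀ s x, μ s x = Φ T s *ᵥ x + ∫ τ in s..T, Φ T τ *ᵥ βtil τ)
    (hK : ∀ s, K s = ∫ τ in s..T, Φ T τ * atil τ * (Φ T τ)ᵀ)
    -- the transition density `p̃(s, x) = p̃(s, x; T, v)`
    (ptil : ℝ → (Fin d → ℝ) → ℝ)
    (hptil : ∀ s x, ptil s x =
      (2 * π) ^ (-(d : ℝ) / 2) * (K s).det ^ (-(1 : ℝ) / 2) *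
        Real.exp (-(1 / 2) * ((v - μ s x) ⬝ᵥ ((K s)⁻¹ *ᵥ (v - μ s x))))) :
    ∃ C > (0 : ℝ), ∃ Λ > (0 : ℝ), ∀ s ∈ Set.Ico (0 : ℝ) T, ∀ x : Fin d → ℝ,
      ptil s x ≤ C * (T - s) ^ (-(d : ℝ) / 2) *
        Real.exp (-Λ * ((v - x) ⬝ᵥ (v - x)) / (T - s)) :=
  stmt_7_general hd T v Btil βtil σtil hB hβ Lσ hσ atil hatil η hη hell Φ hΦid hΦderiv μ K hμ hK
    ptil hptil
end

section
/- Let J̃(s) = wH̃(s)w with w, H̃ as in Lemma 6.1, and set Ṽ(s) = J̃(s)⁻¹. If Ṽ(T) = 0, Ṽ'(T) = -I, and Ṽ' is Lipschitz on [0,T], then ‖(T-s)I - Ṽ(s)‖ ≲ (T-s)² for all s ∈ [0,T], and consequently there exists C > 0 such that ‖J̃(s) - (T-s)⁻¹I‖ ≤ C for all s < T. -/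
/-!
Since `Ṽ(T) = 0` and `Ṽ'(T) = -I`, the map `s ↦ (T-s)I - Ṽ(s)` vanishes at `T` and its derivative
`Ṽ'(T) - Ṽ'(s)` is `O(T-s)` by the Lipschitz bound, so the mean value inequality gives
`‖(T-s)I - Ṽ(s)‖ ≲ (T-s)²`. Then `J̃(s) - (T-s)⁻¹I = (T-s)⁻¹ J̃(s)((T-s)I - Ṽ(s))`, and the bound
`(T-s)‖J̃(s)‖ ≤ C₀` cancels the remaining powers of `T-s`.
-/

open Set

attribute [local instance] Matrix.normedAddCommGroup Matrix.normedSpace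

theorem norm_sub_sub_smul_deriv_le_of_lipschitzOnWith {E : Type*} [NormedAddCommGroup E]
    [NormedSpace ℝ E] {f f' : ℝ → E} {a b : ℝ} {L : NNReal} (hab : a ≤ b)
    (hf : ∀ x ∈ Icc a b, HasDerivWithinAt f (f' x) (Icc a b) x)
    (hL : LipschitzOnWith L f' (Icc a b)) :
    ‖f a - f b - (a - b) • f' b‖ ≤ L * (b - a) ^ 2 := by
  set g : ℝ → E := fun x => f x - f b - (x - b) • f' b
  have hg : ∀ x ∈ Icc a b, HasDerivWithinAt g (f' x - f' b) (Icc a b) x := fun x hx => by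
    refine (((hf x hx).sub_const (f b)).sub (((hasDerivAt_id x).sub_const b).smul_const
      (f' b)).hasDerivWithinAt).congr_deriv ?_
    simp
  have hg' : ∀ x ∈ Ico a b, ‖f' x - f' b‖ ≤ L * (b - a) := fun x hx => by
    have hxb : dist x b ≤ b - a := by
      rw [Real.dist_eq, abs_of_nonpos (by linarith [hx.2])]
      linarith [hx.1]
    calc ‖f' x - f' b‖ = dist (f' x) (f' b) := (dist_eq_norm _ _).symm
      _ ≤ L * dist x b := hL.dist_le_mul x (Ico_subset_Icc_self hx) b (right_mem_Icc.2 hab)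
      _ ≤ L * (b - a) := by gcongr
  have h := norm_image_sub_le_of_norm_deriv_le_segment' hg hg' b (right_mem_Icc.2 hab)
  simpa [g, norm_sub_rev, sq, mul_assoc] using h

theorem Matrix.norm_mul_le_card_mul {α m n p : Type*} [NormedRing α] [Fintype m] [Fintype n]
    [Fintype p] (A : Matrix m n α) (B : Matrix n p α) :
    ‖A * B‖ ≤ Fintype.card n * ‖A‖ * ‖B‖ := by
  rw [Matrix.norm_le_iff (by positivity)]
  intro i j
  calc ‖(A * B) i j‖ ≤ ∑ k, ‖A i k * B k j‖ := by
        rw [Matrix.mul_apply]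
        exact norm_sum_le _ _
    _ ≤ ∑ _k : n, ‖A‖ * ‖B‖ := by
        gcongr with k
        exact (norm_mul_le _ _).trans (mul_le_mul (norm_entry_le_entrywise_sup_norm A)
          (norm_entry_le_entrywise_sup_norm B) (norm_nonneg _) (norm_nonneg _))
    _ = Fintype.card n * ‖A‖ * ‖B‖ := by simp [mul_assoc]

theorem Matrix.mul_eq_one_or_eq_zero_and_eq_zero {n α : Type*} [Fintype n] [DecidableEq n]
    [CommRing α] {J V : Matrix n n α} (hJ : J = V⁻¹) (hV : V = J⁻¹) :
    J * V = 1 ∨ (J = 0 ∧ V = 0) := by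
  by_cases hdet : IsUnit V.det
  · exact .inl (hJ ▸ V.nonsing_inv_mul hdet)
  · have hJ0 : J = 0 := hJ ▸ V.nonsing_inv_apply_not_isUnit hdet
    exact .inr ⟨hJ0, by rw [hV, hJ0, Matrix.inv_zero]⟩

theorem norm_sub_inv_smul_one_le_of_mul_eq_one {n : Type*} [Fintype n] [DecidableEq n]
    {J V : Matrix n n ℝ} {t C₀ C₁ : ℝ}
    (ht : 0 < t) (hC₁ : 0 ≤ C₁) (hJV : J * V = 1) (hJ : t * ‖J‖ ≤ C₀)
    (hV : ‖t • 1 - V‖ ≤ C₁ * t ^ 2) :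
    ‖J - t⁻¹ • 1‖ ≤ Fintype.card n * C₀ * C₁ := by
  have hid : J - t⁻¹ • 1 = t⁻¹ • (J * (t • 1 - V)) := by
    rw [Matrix.mul_sub, hJV, Matrix.mul_smul, Matrix.mul_one, smul_sub, smul_smul,
      inv_mul_cancel₀ ht.ne', one_smul]
  rw [hid, norm_smul, Real.norm_of_nonneg (inv_nonneg.2 ht.le)]
  calc t⁻¹ * ‖J * (t • 1 - V)‖ ≤ t⁻¹ * (Fintype.card n * ‖J‖ * (C₁ * t ^ 2)) := by
        gcongr
        exact (Matrix.norm_mul_le_card_mul _ _).trans (by gcongr)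
    _ = Fintype.card n * (t * ‖J‖) * C₁ := by field_simp
    _ ≤ Fintype.card n * C₀ * C₁ := by gcongr

theorem norm_inv_smul_le_of_norm_smul_le {E : Type*} [NormedAddCommGroup E] [NormedSpace ℝ E]
    {x : E} {t C : ℝ} (ht : 0 < t) (h : ‖t • x‖ ≤ C * t ^ 2) : ‖t⁻¹ • x‖ ≤ C := by
  rw [norm_smul, Real.norm_of_nonneg ht.le] at h
  rw [norm_smul, Real.norm_of_nonneg (inv_nonneg.2 ht.le), inv_mul_le_iff₀ ht]
  nlinarith

/-- Lemma 6.3: with `J̃(s) = wH̃(s)w` and `Ṽ(s) = J̃(s)⁻¹`, if `Ṽ(T) = 0`,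
`Ṽ'(T) = -I` and `Ṽ'` is Lipschitz on `[0,T]`, then
`‖(T-s)I - Ṽ(s)‖ ≲ (T-s)²`, and consequently `‖J̃(s) - (T-s)⁻¹I‖` is bounded
uniformly over `s < T`. -/
theorem stmt_12 {d : ℕ} (T : ℝ) (hT : 0 < T)
    (Jtil Vtil V' : ℝ → Matrix (Fin d) (Fin d) ℝ)
    (hVtil : ∀ s ∈ Set.Icc (0 : ℝ) T, Vtil s = (Jtil s)⁻¹)
    (hJV : ∀ s ∈ Set.Icc (0 : ℝ) T, Jtil s = (Vtil s)⁻¹)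
    (hderiv : ∀ s ∈ Set.Icc (0 : ℝ) T, HasDerivAt Vtil (V' s) s)
    (hVT : Vtil T = 0) (hV'T : V' T = -1)
    (L : NNReal) (hLip : LipschitzOnWith L V' (Set.Icc 0 T))
    -- the uniform bound `(T-s)‖H̃(s)‖ ≤ C₀` from Lemma 5.3
    (C₀ : ℝ) (hC₀ : ∀ s ∈ Set.Ico (0 : ℝ) T, (T - s) * ‖Jtil s‖ ≤ C₀) :
    (∃ C₁ > (0 : ℝ), ∀ s ∈ Set.Icc (0 : ℝ) T,
      ‖(T - s) • (1 : Matrix (Fin d) (Fin d) ℝ) - Vtil s‖ ≤ C₁ * (T - s) ^ 2) ∧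
    (∃ C > (0 : ℝ), ∀ s ∈ Set.Ico (0 : ℝ) T,
      ‖Jtil s - (T - s)⁻¹ • (1 : Matrix (Fin d) (Fin d) ℝ)‖ ≤ C) := by
  have hV : ∀ s ∈ Icc 0 T, ‖(T - s) • (1 : Matrix (Fin d) (Fin d) ℝ) - Vtil s‖
      ≤ (L + 1) * (T - s) ^ 2 := fun s hs => by
    have h := norm_sub_sub_smul_deriv_le_of_lipschitzOnWith hs.2
      (fun u hu => (hderiv u ⟨hs.1.trans hu.1, hu.2⟩).hasDerivWithinAt)
      (hLip.mono (Icc_subset_Icc_left hs.1))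
    rw [hVT, hV'T, sub_zero, smul_neg, ← neg_smul, neg_sub, norm_sub_rev] at h
    exact h.trans (by gcongr; linarith)
  have hC₀ₙₙ : 0 ≤ C₀ := (mul_nonneg (by linarith) (norm_nonneg _)).trans (hC₀ 0 ⟨le_rfl, hT⟩)
  refine ⟨⟨L + 1, by positivity, hV⟩, d * C₀ * (L + 1) + (L + 1), by positivity, fun s hs => ?_⟩
  have ht : 0 < T - s := sub_pos.2 hs.2
  have hs' : s ∈ Icc 0 T := Ico_subset_Icc_self hs
  rcases Matrix.mul_eq_one_or_eq_zero_and_eq_zero (hJV s hs') (hVtil s hs') with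
    hmul | ⟨hJ0, hV0⟩
  · have h := norm_sub_inv_smul_one_le_of_mul_eq_one ht (by positivity) hmul (hC₀ s hs) (hV s hs')
    rw [Fintype.card_fin] at h
    linarith
  · have h := hV s hs'
    rw [hV0, sub_zero] at h
    rw [hJ0, zero_sub, norm_neg]
    exact (norm_inv_smul_le_of_norm_smul_le ht h).trans (le_add_of_nonneg_left (by positivity))
end
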